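/- arXiv:2503.14885 — 3 statements merged into one kernel-verified Lean document; each statement's English description precedes it below -/
import Mathlib

section
/- Let 1 < d₁ < 2 and let d₁' = d₁/(d₁−1) be its conjugate exponent. Consider the integral operator T f(x) = ∫₁^∞ K(x,y) f(y) y^{d₁−1} dy with kernel K(x,y) = x^{1−d₁} y^{−1} for 1 ≤ x ≤ y and K(x,y) = x^{−d₁} for x > y ≥ 1. Then for every p with 1 < p < d₁' there exists a constant C > 0 such that ‖Tf‖_{L^p([1,∞), μ_{d₁})} ≤ C ‖f‖_{L^p([1,∞), μ_{d₁})} for all f ∈ L^p([1,∞), μ_{d₁}). -/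
open MeasureTheory Set

/-- The measure on `[1,∞)` with density `r ^ (n-1)` with respect to Lebesgue measure. -/
noncomputable def mu (n : ℝ) : Measure ℝ :=
  (volume.restrict (Ici (1 : ℝ))).withDensity fun r => ENNReal.ofReal (r ^ (n - 1))

/-!
Schur test with the power weights `x ↦ x ^ (-t)`. Against `dμ_d`, the kernel integrates the power
`y ^ (-s)` in `y` to at most a constant times `x ^ (-s)` when `d - 1 < s < d`, and the power
`x ^ (-r)` in `x` to at most a constant times `y ^ (-r)` when `0 < r < 1`. The Schur test needs
this for `s = t p'` and `r = t p`, and such a `t` exists exactly when `(d - 1) / p' < 1 / p`,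
i.e. when `p < d'`.
-/

open Function
open scoped ENNReal

section SchurTest

variable {α β : Type*} [MeasurableSpace α] [MeasurableSpace β] {μ : Measure α} {ν : Measure β}
  {p q : ℝ}

theorem lintegral_mul_le_weighted (hpq : p.HolderConjugate q) {k φ g : β → ℝ≥0∞}
    (hk : AEMeasurable k ν) (hφ : AEMeasurable φ ν) (hg : AEMeasurable g ν)
    (hφ0 : ∀ᵐ y ∂ν, φ y ≠ 0) (hφtop : ∀ᵐ y ∂ν, φ y ≠ ∞) :
    ∫⁻ y, k y * g y ∂ν ≤
      (∫⁻ y, k y * φ y ^ q ∂ν) ^ (1 / q) * (∫⁻ y, k y * (φ y)⁻¹ ^ p * g y ^ p ∂ν) ^ (1 / p) := by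
  have hp : 0 < p := hpq.pos
  have hq : 0 < q := hpq.symm.pos
  have hsplit : ∀ᵐ y ∂ν, k y * g y = (k y ^ (1 / p) * (φ y)⁻¹ * g y) * (k y ^ (1 / q) * φ y) := by
    filter_upwards [hφ0, hφtop] with y h0 htop
    calc k y * g y = k y ^ (1 / p + 1 / q) * ((φ y)⁻¹ * φ y) * g y := by
          rw [one_div, one_div, hpq.inv_add_inv_eq_one, ENNReal.rpow_one,
            ENNReal.inv_mul_cancel h0 htop, mul_one]
      _ = _ := by rw [ENNReal.rpow_add_of_nonneg _ _ (by positivity) (by positivity)]; ring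
  have hpow : ∀ {r : ℝ}, 0 < r → ∀ a b : ℝ≥0∞, (a ^ (1 / r) * b) ^ r = a * b ^ r := by
    intro r hr a b
    rw [ENNReal.mul_rpow_of_nonneg _ _ hr.le, ← ENNReal.rpow_mul, one_div_mul_cancel hr.ne',
      ENNReal.rpow_one]
  calc ∫⁻ y, k y * g y ∂ν
      = ∫⁻ y, ((fun y ↦ k y ^ (1 / p) * (φ y)⁻¹ * g y) * fun y ↦ k y ^ (1 / q) * φ y) y ∂ν :=
        lintegral_congr_ae hsplit
    _ ≤ (∫⁻ y, (k y ^ (1 / p) * (φ y)⁻¹ * g y) ^ p ∂ν) ^ (1 / p) *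
          (∫⁻ y, (k y ^ (1 / q) * φ y) ^ q ∂ν) ^ (1 / q) :=
        ENNReal.lintegral_mul_le_Lp_mul_Lq ν hpq (by fun_prop) (by fun_prop)
    _ = _ := by
        simp only [ENNReal.mul_rpow_of_nonneg _ (g _) hp.le, hpow hp, hpow hq]
        rw [mul_comm]

variable [SFinite μ] [SFinite ν]

theorem lintegral_rpow_lintegral_kernel_le (hpq : p.HolderConjugate q) {K : α → β → ℝ≥0∞}
    (hK : Measurable (uncurry K)) {φ : β → ℝ≥0∞} {ψ : α → ℝ≥0∞} (hφ : Measurable φ)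
    (hψ : Measurable ψ) (hφ0 : ∀ᵐ y ∂ν, φ y ≠ 0) (hφtop : ∀ᵐ y ∂ν, φ y ≠ ∞) {C₁ C₂ : ℝ≥0∞}
    (h₁ : ∀ᵐ x ∂μ, ∫⁻ y, K x y * φ y ^ q ∂ν ≤ C₁ * ψ x ^ q)
    (h₂ : ∀ᵐ y ∂ν, ∫⁻ x, K x y * ψ x ^ p ∂μ ≤ C₂ * φ y ^ p)
    {g : β → ℝ≥0∞} (hg : AEMeasurable g ν) :
    ∫⁻ x, (∫⁻ y, K x y * g y ∂ν) ^ p ∂μ ≤ C₁ ^ (p / q) * C₂ * ∫⁻ y, g y ^ p ∂ν := by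
  have hp : 0 < p := hpq.pos
  have hq : 0 < q := hpq.symm.pos
  set G : β → ℝ≥0∞ := fun y ↦ (φ y)⁻¹ ^ p * g y ^ p
  have hG : AEMeasurable G ν := by fun_prop
  have hpointwise : ∀ᵐ x ∂μ, (∫⁻ y, K x y * g y ∂ν) ^ p ≤
      C₁ ^ (p / q) * (ψ x ^ p * ∫⁻ y, K x y * G y ∂ν) := by
    filter_upwards [h₁] with x hx
    have hKx : Measurable (K x) := hK.of_uncurry_left
    calc (∫⁻ y, K x y * g y ∂ν) ^ p
        ≤ ((C₁ * ψ x ^ q) ^ (1 / q) * (∫⁻ y, K x y * G y ∂ν) ^ (1 / p)) ^ p := by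
          gcongr
          refine (lintegral_mul_le_weighted hpq hKx.aemeasurable hφ.aemeasurable hg hφ0
            hφtop).trans ?_
          simp only [mul_assoc, G]
          gcongr
      _ = C₁ ^ (p / q) * (ψ x ^ p * ∫⁻ y, K x y * G y ∂ν) := by
          have hexp : q * (1 / q * p) = p := by field_simp
          rw [ENNReal.mul_rpow_of_nonneg _ _ hp.le, ← ENNReal.rpow_mul, ← ENNReal.rpow_mul,
            one_div_mul_cancel hp.ne', ENNReal.rpow_one,
            ENNReal.mul_rpow_of_nonneg _ _ (by positivity), ← ENNReal.rpow_mul, hexp,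
            one_div_mul_eq_div, mul_assoc]
  have hswap : AEMeasurable (uncurry fun x y ↦ K x y * ψ x ^ p * G y) (μ.prod ν) := by
    have := hK.aemeasurable (μ := μ.prod ν)
    exact (this.mul ((hψ.pow_const p).comp measurable_fst).aemeasurable).mul hG.comp_snd
  have hcancel : ∀ᵐ y ∂ν, φ y ^ p * G y = g y ^ p := by
    filter_upwards [hφ0, hφtop] with y h0 htop
    rw [← mul_assoc, ← ENNReal.mul_rpow_of_nonneg _ _ hp.le, ENNReal.mul_inv_cancel h0 htop,
      ENNReal.one_rpow, one_mul]
  calc ∫⁻ x, (∫⁻ y, K x y * g y ∂ν) ^ p ∂μ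
      ≤ ∫⁻ x, C₁ ^ (p / q) * (ψ x ^ p * ∫⁻ y, K x y * G y ∂ν) ∂μ := lintegral_mono_ae hpointwise
    _ = C₁ ^ (p / q) * ∫⁻ x, ∫⁻ y, K x y * ψ x ^ p * G y ∂ν ∂μ := by
        have hinner : ∀ x, ψ x ^ p * ∫⁻ y, K x y * G y ∂ν = ∫⁻ y, K x y * ψ x ^ p * G y ∂ν := by
          intro x
          have hKG : AEMeasurable (fun y ↦ K x y * G y) ν := hK.of_uncurry_left.aemeasurable.mul hG
          rw [← lintegral_const_mul'' _ hKG]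
          congr 1 with y
          ring
        simp_rw [hinner]
        exact lintegral_const_mul'' _ hswap.lintegral_prod_right'
    _ = C₁ ^ (p / q) * ∫⁻ y, (∫⁻ x, K x y * ψ x ^ p ∂μ) * G y ∂ν := by
        rw [lintegral_lintegral_swap hswap]
        congr 1
        refine lintegral_congr fun y ↦ lintegral_mul_const _ ?_
        exact hK.of_uncurry_right.mul (hψ.pow_const p)
    _ ≤ C₁ ^ (p / q) * ∫⁻ y, C₂ * φ y ^ p * G y ∂ν := by
        gcongr 1
        exact lintegral_mono_ae (h₂.mono fun y hy ↦ mul_le_mul_left hy _)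
    _ = C₁ ^ (p / q) * C₂ * ∫⁻ y, g y ^ p ∂ν := by
        rw [mul_assoc, ← lintegral_const_mul'' _ (hg.pow_const p)]
        congr 1
        exact lintegral_congr_ae (hcancel.mono fun y hy ↦ by dsimp only; rw [mul_assoc, hy])

theorem eLpNorm_lintegral_kernel_le (hpq : p.HolderConjugate q) {K : α → β → ℝ≥0∞}
    (hK : Measurable (uncurry K)) {φ : β → ℝ≥0∞} {ψ : α → ℝ≥0∞} (hφ : Measurable φ)
    (hψ : Measurable ψ) (hφ0 : ∀ᵐ y ∂ν, φ y ≠ 0) (hφtop : ∀ᵐ y ∂ν, φ y ≠ ∞) {C₁ C₂ : ℝ≥0∞}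
    (h₁ : ∀ᵐ x ∂μ, ∫⁻ y, K x y * φ y ^ q ∂ν ≤ C₁ * ψ x ^ q)
    (h₂ : ∀ᵐ y ∂ν, ∫⁻ x, K x y * ψ x ^ p ∂μ ≤ C₂ * φ y ^ p)
    {g : β → ℝ≥0∞} (hg : AEMeasurable g ν) :
    eLpNorm (fun x ↦ ∫⁻ y, K x y * g y ∂ν) (ENNReal.ofReal p) μ ≤
      C₁ ^ (1 / q) * C₂ ^ (1 / p) * eLpNorm g (ENNReal.ofReal p) ν := by
  have hp : 0 < p := hpq.pos
  have hp0 : ENNReal.ofReal p ≠ 0 := by simpa using hp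
  simp only [eLpNorm_eq_lintegral_rpow_enorm_toReal hp0 ENNReal.ofReal_ne_top,
    ENNReal.toReal_ofReal hp.le, enorm_eq_self]
  calc (∫⁻ x, (∫⁻ y, K x y * g y ∂ν) ^ p ∂μ) ^ (1 / p)
      ≤ (C₁ ^ (p / q) * C₂ * ∫⁻ y, g y ^ p ∂ν) ^ (1 / p) := by
        gcongr
        exact lintegral_rpow_lintegral_kernel_le hpq hK hφ hψ hφ0 hφtop h₁ h₂ hg
    _ = C₁ ^ (1 / q) * C₂ ^ (1 / p) * (∫⁻ y, g y ^ p ∂ν) ^ (1 / p) := by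
        rw [ENNReal.mul_rpow_of_nonneg _ _ (by positivity),
          ENNReal.mul_rpow_of_nonneg _ _ (by positivity), ← ENNReal.rpow_mul]
        congr 3
        field_simp

end SchurTest

theorem lintegral_Ioc_zero_rpow {c : ℝ} (hc : -1 < c) {x : ℝ} (hx : 0 ≤ x) :
    ∫⁻ y in Ioc 0 x, ENNReal.ofReal (y ^ c) = ENNReal.ofReal (x ^ (c + 1) / (c + 1)) := by
  rw [← ofReal_integral_eq_lintegral_ofReal, ← intervalIntegral.integral_of_le hx,
    integral_rpow (.inl hc), Real.zero_rpow (by linarith), sub_zero]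
  · exact (intervalIntegrable_iff_integrableOn_Ioc_of_le hx).1
      (intervalIntegral.intervalIntegrable_rpow' hc)
  · filter_upwards [ae_restrict_mem measurableSet_Ioc] with y hy
    exact Real.rpow_nonneg hy.1.le c

theorem lintegral_Ioi_rpow {c : ℝ} (hc : c < -1) {x : ℝ} (hx : 0 < x) :
    ∫⁻ y in Ioi x, ENNReal.ofReal (y ^ c) = ENNReal.ofReal (x ^ (c + 1) / -(c + 1)) := by
  rw [← ofReal_integral_eq_lintegral_ofReal (integrableOn_Ioi_rpow_of_lt hc hx),
    integral_Ioi_rpow_of_lt hc hx, neg_div, div_neg]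
  filter_upwards [ae_restrict_mem measurableSet_Ioi] with y hy
  exact Real.rpow_nonneg (hx.trans hy).le c

theorem setLIntegral_Ici_one_le_add (F : ℝ → ℝ≥0∞) (a : ℝ) :
    ∫⁻ y in Ici 1, F y ≤ (∫⁻ y in Ioc 0 a, F y) + ∫⁻ y in Ioi a, F y := by
  refine (lintegral_mono_set fun y (hy : 1 ≤ y) ↦ ?_).trans (lintegral_union_le F _ _)
  rcases le_or_gt y a with h | h
  exacts [.inl ⟨one_pos.trans_le hy, h⟩, .inr h]

theorem lintegral_mu (d : ℝ) (F : ℝ → ℝ≥0∞) :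
    ∫⁻ x, F x ∂mu d = ∫⁻ x in Ici 1, ENNReal.ofReal (x ^ (d - 1)) * F x :=
  lintegral_withDensity_eq_lintegral_mul_non_measurable _ (by fun_prop)
    (ae_of_all _ fun _ ↦ ENNReal.ofReal_lt_top) F

instance (d : ℝ) : SFinite (mu d) := by
  unfold mu
  infer_instance

theorem ae_one_le_mu (d : ℝ) : ∀ᵐ x ∂mu d, 1 ≤ x :=
  (withDensity_absolutelyContinuous _ _).ae_le (ae_restrict_mem measurableSet_Ici)

noncomputable def kernel (d x y : ℝ) : ℝ :=
  if x ≤ y then x ^ (1 - d) * y ^ (-1 : ℝ) else x ^ (-d)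

theorem kernel_of_le {d x y : ℝ} (h : x ≤ y) : kernel d x y = x ^ (1 - d) * y ^ (-1 : ℝ) :=
  if_pos h

theorem kernel_of_ge {d x y : ℝ} (hx : 0 < x) (h : y ≤ x) : kernel d x y = x ^ (-d) := by
  rcases h.lt_or_eq with h | rfl
  · exact if_neg h.not_ge
  · rw [kernel_of_le le_rfl, ← Real.rpow_add hx]
    ring_nf

theorem kernel_nonneg {d x y : ℝ} (hx : 0 ≤ x) : 0 ≤ kernel d x y := by
  unfold kernel
  split_ifs with h
  · exact mul_nonneg (Real.rpow_nonneg hx _) (Real.rpow_nonneg (hx.trans h) _)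
  · exact Real.rpow_nonneg hx _

theorem measurable_kernel (d : ℝ) : Measurable (uncurry (kernel d)) :=
  Measurable.ite (measurableSet_le measurable_fst measurable_snd) (by fun_prop) (by fun_prop)

theorem lintegral_kernel_mul_rpow_snd_le {d s x : ℝ} (hs₁ : d - 1 < s) (hs₂ : s < d)
    (hx : 1 ≤ x) :
    ∫⁻ y, ENNReal.ofReal (kernel d x y) * ENNReal.ofReal y ^ (-s) ∂mu d ≤
      ENNReal.ofReal (1 / (d - s) + 1 / (s + 1 - d)) * ENNReal.ofReal x ^ (-s) := by
  have hx0 : 0 < x := one_pos.trans_le hx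
  set F : ℝ → ℝ≥0∞ := fun y ↦
    ENNReal.ofReal (y ^ (d - 1)) * (ENNReal.ofReal (kernel d x y) * ENNReal.ofReal y ^ (-s))
  have hbelow : EqOn F (fun y ↦ ENNReal.ofReal (x ^ (-d)) * ENNReal.ofReal (y ^ (d - 1 - s)))
      (Ioc 0 x) := by
    intro y hy
    have hy0 := hy.1
    simp only [F]
    rw [kernel_of_ge hx0 hy.2, ENNReal.ofReal_rpow_of_pos hy0, ← ENNReal.ofReal_mul
      (by positivity), ← ENNReal.ofReal_mul (by positivity), ← ENNReal.ofReal_mul (by positivity),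
      sub_eq_add_neg _ s, Real.rpow_add hy0]
    ring_nf
  have habove : EqOn F (fun y ↦ ENNReal.ofReal (x ^ (1 - d)) * ENNReal.ofReal (y ^ (d - 2 - s)))
      (Ioi x) := by
    intro y hy
    have hy0 : 0 < y := hx0.trans hy
    simp only [F]
    rw [kernel_of_le hy.le, ENNReal.ofReal_rpow_of_pos hy0, ← ENNReal.ofReal_mul
      (by positivity), ← ENNReal.ofReal_mul (by positivity), ← ENNReal.ofReal_mul (by positivity),
      show d - 2 - s = (d - 1) + (-1) + (-s) by ring, Real.rpow_add hy0, Real.rpow_add hy0]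
    ring_nf
  rw [lintegral_mu]
  calc ∫⁻ y in Ici 1, F y
      ≤ (∫⁻ y in Ioc 0 x, F y) + ∫⁻ y in Ioi x, F y := setLIntegral_Ici_one_le_add F x
    _ = ENNReal.ofReal (x ^ (-d)) * ENNReal.ofReal (x ^ (d - s) / (d - s)) +
          ENNReal.ofReal (x ^ (1 - d)) * ENNReal.ofReal (x ^ (d - 1 - s) / (s + 1 - d)) := by
        rw [setLIntegral_congr_fun measurableSet_Ioc hbelow,
          setLIntegral_congr_fun measurableSet_Ioi habove,
          lintegral_const_mul' _ _ ENNReal.ofReal_ne_top,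
          lintegral_const_mul' _ _ ENNReal.ofReal_ne_top,
          lintegral_Ioc_zero_rpow (by linarith) hx0.le, lintegral_Ioi_rpow (by linarith) hx0]
        ring_nf
    _ = _ := by
        have hds : 0 < d - s := by linarith
        have hsd : 0 < s + 1 - d := by linarith
        have h₁ : x ^ (-d) * x ^ (d - s) = x ^ (-s) := by rw [← Real.rpow_add hx0]; ring_nf
        have h₂ : x ^ (1 - d) * x ^ (d - 1 - s) = x ^ (-s) := by rw [← Real.rpow_add hx0]; ring_nf
        rw [ENNReal.ofReal_rpow_of_pos hx0, ← ENNReal.ofReal_mul (by positivity),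
          ← ENNReal.ofReal_mul (by positivity), ← ENNReal.ofReal_mul (by positivity),
          ← ENNReal.ofReal_add (by positivity) (by positivity), mul_div_assoc',
          mul_div_assoc', h₁, h₂]
        ring_nf

theorem lintegral_kernel_mul_rpow_fst_le {d r y : ℝ} (hr₀ : 0 < r) (hr₁ : r < 1) (hy : 1 ≤ y) :
    ∫⁻ x, ENNReal.ofReal (kernel d x y) * ENNReal.ofReal x ^ (-r) ∂mu d ≤
      ENNReal.ofReal (1 / (1 - r) + 1 / r) * ENNReal.ofReal y ^ (-r) := by
  have hy0 : 0 < y := one_pos.trans_le hy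
  set F : ℝ → ℝ≥0∞ := fun x ↦
    ENNReal.ofReal (x ^ (d - 1)) * (ENNReal.ofReal (kernel d x y) * ENNReal.ofReal x ^ (-r))
  have hbelow : EqOn F (fun x ↦ ENNReal.ofReal (y ^ (-1 : ℝ)) * ENNReal.ofReal (x ^ (-r)))
      (Ioc 0 y) := by
    intro x hx
    have hx0 := hx.1
    simp only [F]
    rw [kernel_of_le hx.2, ENNReal.ofReal_rpow_of_pos hx0, ← ENNReal.ofReal_mul
      (by positivity), ← ENNReal.ofReal_mul (by positivity), ← ENNReal.ofReal_mul (by positivity)]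
    congr 1
    have hcancel : x ^ (d - 1) * x ^ (1 - d) = 1 := by
      rw [← Real.rpow_add hx0, show d - 1 + (1 - d) = 0 by ring, Real.rpow_zero]
    linear_combination (y ^ (-1 : ℝ) * x ^ (-r)) * hcancel
  have habove : EqOn F (fun x ↦ ENNReal.ofReal (x ^ (-1 - r))) (Ioi y) := by
    intro x hx
    have hx0 : 0 < x := hy0.trans hx
    simp only [F]
    rw [kernel_of_ge hx0 hx.le, ENNReal.ofReal_rpow_of_pos hx0, ← ENNReal.ofReal_mul
      (by positivity), ← ENNReal.ofReal_mul (by positivity), ← Real.rpow_add hx0,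
      ← Real.rpow_add hx0]
    ring_nf
  rw [lintegral_mu]
  calc ∫⁻ x in Ici 1, F x
      ≤ (∫⁻ x in Ioc 0 y, F x) + ∫⁻ x in Ioi y, F x := setLIntegral_Ici_one_le_add F y
    _ = ENNReal.ofReal (y ^ (-1 : ℝ)) * ENNReal.ofReal (y ^ (1 - r) / (1 - r)) +
          ENNReal.ofReal (y ^ (-r) / r) := by
        rw [setLIntegral_congr_fun measurableSet_Ioc hbelow,
          setLIntegral_congr_fun measurableSet_Ioi habove,
          lintegral_const_mul' _ _ ENNReal.ofReal_ne_top,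
          lintegral_Ioc_zero_rpow (by linarith) hy0.le, lintegral_Ioi_rpow (by linarith) hy0]
        ring_nf
    _ = _ := by
        have h : y ^ (-1 : ℝ) * y ^ (1 - r) = y ^ (-r) := by rw [← Real.rpow_add hy0]; ring_nf
        have h1r : 0 < 1 - r := by linarith
        rw [ENNReal.ofReal_rpow_of_pos hy0, ← ENNReal.ofReal_mul (by positivity),
          ← ENNReal.ofReal_add (by positivity) (by positivity),
          ← ENNReal.ofReal_mul (by positivity), mul_div_assoc', h]
        ring_nf

theorem enorm_setIntegral_kernel_le {d x : ℝ} (hx : 0 ≤ x) (f : ℝ → ℝ) :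
    ‖∫ y in Ici 1, kernel d x y * f y * y ^ (d - 1)‖ₑ ≤
      ∫⁻ y, ENNReal.ofReal (kernel d x y) * ‖f y‖ₑ ∂mu d := by
  rw [lintegral_mu]
  refine (enorm_integral_le_lintegral_enorm _).trans_eq
    (setLIntegral_congr_fun measurableSet_Ici fun y (hy : 1 ≤ y) ↦ ?_)
  rw [enorm_mul, enorm_mul, Real.enorm_eq_ofReal (kernel_nonneg hx),
    Real.enorm_eq_ofReal (Real.rpow_nonneg (zero_le_one.trans hy) _)]
  ring

theorem exists_schur_exponent {d p q : ℝ} (hd : 1 < d) (hpq : p.HolderConjugate q)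
    (hp : p < d / (d - 1)) : ∃ t, d - 1 < t * q ∧ t * q < d ∧ 0 < t * p ∧ t * p < 1 := by
  have hp0 : 0 < p := hpq.pos
  have hq : 0 < q := hpq.symm.pos
  have hgap : (d - 1) / q < min (1 / p) (d / q) := by
    have hkey : (d - 1) * p < d := by rwa [lt_div_iff₀ (by linarith), mul_comm] at hp
    have hinv : 1 / p + 1 / q = 1 := by simpa only [one_div] using hpq.inv_add_inv_eq_one
    refine lt_min ?_ (by gcongr; linarith)
    rw [div_eq_mul_one_div, ← sub_eq_of_eq_add' hinv.symm]
    field_simp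
    nlinarith
  obtain ⟨t, ht_low, ht_high⟩ := exists_between hgap
  rw [lt_min_iff, lt_div_iff₀ hp0, lt_div_iff₀ hq] at ht_high
  rw [div_lt_iff₀ hq] at ht_low
  have ht : 0 < t := pos_of_mul_pos_left (by linarith) hq.le
  exact ⟨t, ht_low, ht_high.2, by positivity, ht_high.1⟩

theorem exists_eLpNorm_lintegral_kernel_le {d p q t : ℝ} (hpq : p.HolderConjugate q)
    (hs₁ : d - 1 < t * q) (hs₂ : t * q < d) (hr₀ : 0 < t * p) (hr₁ : t * p < 1) :
    ∃ C > 0, ∀ g : ℝ → ℝ≥0∞, AEMeasurable g (mu d) →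
      eLpNorm (fun x ↦ ∫⁻ y, ENNReal.ofReal (kernel d x y) * g y ∂mu d) (ENNReal.ofReal p) (mu d) ≤
        ENNReal.ofReal C * eLpNorm g (ENNReal.ofReal p) (mu d) := by
  set c₁ := 1 / (d - t * q) + 1 / (t * q + 1 - d)
  set c₂ := 1 / (1 - t * p) + 1 / (t * p)
  have hc₁ : 0 < c₁ := by
    have : 0 < d - t * q := by linarith
    have : 0 < t * q + 1 - d := by linarith
    positivity
  have hc₂ : 0 < c₂ := by
    have : 0 < 1 - t * p := by linarith
    positivity
  refine ⟨c₁ ^ (1 / q) * c₂ ^ (1 / p), by positivity, fun g hg ↦ ?_⟩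
  set w : ℝ → ℝ≥0∞ := fun x ↦ ENNReal.ofReal x ^ (-t)
  have hw : ∀ᵐ x ∂mu d, w x ≠ 0 ∧ w x ≠ ∞ := (ae_one_le_mu d).mono fun x hx ↦ by
    simp only [w]
    rw [ENNReal.ofReal_rpow_of_pos (by linarith)]
    exact ⟨(ENNReal.ofReal_pos.2 (Real.rpow_pos_of_pos (by linarith) _)).ne', ENNReal.ofReal_ne_top⟩
  have h₁ : ∀ᵐ x ∂mu d, ∫⁻ y, ENNReal.ofReal (kernel d x y) * w y ^ q ∂mu d ≤
      ENNReal.ofReal c₁ * w x ^ q := (ae_one_le_mu d).mono fun x hx ↦ by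
    simp only [w, ← ENNReal.rpow_mul, neg_mul]
    exact lintegral_kernel_mul_rpow_snd_le hs₁ hs₂ hx
  have h₂ : ∀ᵐ y ∂mu d, ∫⁻ x, ENNReal.ofReal (kernel d x y) * w x ^ p ∂mu d ≤
      ENNReal.ofReal c₂ * w y ^ p := (ae_one_le_mu d).mono fun y hy ↦ by
    simp only [w, ← ENNReal.rpow_mul, neg_mul]
    exact lintegral_kernel_mul_rpow_fst_le hr₀ hr₁ hy
  rw [ENNReal.ofReal_mul (by positivity), ← ENNReal.ofReal_rpow_of_pos hc₁,
    ← ENNReal.ofReal_rpow_of_pos hc₂]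
  exact eLpNorm_lintegral_kernel_le hpq (measurable_kernel d).ennreal_ofReal (by fun_prop)
    (by fun_prop) (hw.mono fun _ ↦ And.left) (hw.mono fun _ ↦ And.right) h₁ h₂ hg

theorem III1_Lp_bounded_general
    (d₁ p : ℝ) (hd₁ : 1 < d₁)
    (hp1 : 1 < p) (hp2 : p < d₁ / (d₁ - 1)) :
    ∃ C > 0, ∀ f : ℝ → ℝ, MemLp f (ENNReal.ofReal p) (mu d₁) →
      eLpNorm (fun x => ∫ y in Ici (1 : ℝ),
          (if x ≤ y then x ^ (1 - d₁) * y ^ (-1 : ℝ) else x ^ (-d₁)) * f y * y ^ (d₁ - 1))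
        (ENNReal.ofReal p) (mu d₁) ≤
      ENNReal.ofReal C * eLpNorm f (ENNReal.ofReal p) (mu d₁) := by
  have hpq : p.HolderConjugate p.conjExponent := .conjExponent hp1
  obtain ⟨t, hs₁, hs₂, hr₀, hr₁⟩ := exists_schur_exponent hd₁ hpq hp2
  obtain ⟨C, hC, hT⟩ := exists_eLpNorm_lintegral_kernel_le hpq hs₁ hs₂ hr₀ hr₁
  refine ⟨C, hC, fun f hf ↦ ?_⟩
  calc _ ≤ eLpNorm (fun x ↦ ∫⁻ y, ENNReal.ofReal (kernel d₁ x y) * ‖f y‖ₑ ∂mu d₁)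
        (ENNReal.ofReal p) (mu d₁) :=
        eLpNorm_mono_enorm_ae <| (ae_one_le_mu d₁).mono fun x hx ↦
          (enorm_setIntegral_kernel_le (by linarith) f).trans_eq (enorm_eq_self _).symm
    _ ≤ ENNReal.ofReal C * eLpNorm (fun y ↦ ‖f y‖ₑ) (ENNReal.ofReal p) (mu d₁) := hT _ hf.1.enorm
    _ = _ := by rw [eLpNorm_enorm]

/-- For `1 < d₁ < 2`, the integral operator with kernel
`K(x,y) = x^{1-d₁} y^{-1}` for `x ≤ y` and `x^{-d₁}` for `x > y`
is bounded on `L^p([1,∞), μ_{d₁})` for `1 < p < d₁' = d₁/(d₁-1)`. -/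
theorem III1_Lp_bounded
    (d₁ p : ℝ) (hd₁ : 1 < d₁) (hd₁2 : d₁ < 2)
    (hp1 : 1 < p) (hp2 : p < d₁ / (d₁ - 1)) :
    ∃ C > 0, ∀ f : ℝ → ℝ, MemLp f (ENNReal.ofReal p) (mu d₁) →
      eLpNorm (fun x => ∫ y in Ici (1 : ℝ),
          (if x ≤ y then x ^ (1 - d₁) * y ^ (-1 : ℝ) else x ^ (-d₁)) * f y * y ^ (d₁ - 1))
        (ENNReal.ofReal p) (mu d₁) ≤
      ENNReal.ofReal C * eLpNorm f (ENNReal.ofReal p) (mu d₁) :=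
  III1_Lp_bounded_general d₁ p hd₁ hp1 hp2
end

section
/- Let n > 1, 0 < β < n, and 1 < p ≤ n/(n−β). Then there exists a constant C > 0 such that for every measurable set E ⊆ [1,∞) of finite μ_n-measure, ∫_E y^{−β} y^{n−1} dy ≤ C μ_n(E)^{1/p}. -/
open MeasureTheory Set

/-!
Split `E` at a radius `R > 0`. On `E ∩ [1, R]` the integrand is `y ^ (n - β - 1)`, whose integral
over `(0, R]` is `R ^ (n - β) / (n - β)`; on `E ∩ (R, ∞)` the weight `y ^ (-β)` is at most
`R ^ (-β)`, which contributes `R ^ (-β) μ_n(E)`. With `R = μ_n(E) ^ (1 / n)` both terms are of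
order `μ_n(E) ^ ((n - β) / n)`, and this is at most `μ_n(E) ^ (1 / p)` when `μ_n(E) ≥ 1`, because
`p ≤ n / (n - β)`. When `μ_n(E) ≤ 1`, the bound `y ^ (-β) ≤ 1` gives
`μ_n(E) ≤ μ_n(E) ^ (1 / p)` directly, because `p > 1`.
-/

section
variable {n β : ℝ} {E : Set ℝ}

lemma mu_apply_of_subset (hE : MeasurableSet E) (hE1 : E ⊆ Ici 1) :
    mu n E = ∫⁻ y in E, ENNReal.ofReal (y ^ (n - 1)) := by
  rw [mu, withDensity_apply _ hE, Measure.restrict_restrict hE, inter_eq_self_of_subset_left hE1]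

lemma lintegral_Ioc_zero_rpow_sub_one {s R : ℝ} (hs : 0 < s) (hR : 0 ≤ R) :
    ∫⁻ y in Ioc 0 R, ENNReal.ofReal (y ^ (s - 1)) = ENNReal.ofReal (R ^ s / s) := by
  have hint : IntervalIntegrable (fun y : ℝ => y ^ (s - 1)) volume 0 R :=
    intervalIntegral.intervalIntegrable_rpow' (by linarith)
  have hnonneg : 0 ≤ᵐ[volume.restrict (Ioc 0 R)] fun y : ℝ => y ^ (s - 1) :=
    (ae_restrict_iff' measurableSet_Ioc).mpr (ae_of_all _ fun y hy => Real.rpow_nonneg hy.1.le _)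
  rw [← ofReal_integral_eq_lintegral_ofReal
      ((intervalIntegrable_iff_integrableOn_Ioc_of_le hR).mp hint) hnonneg,
    ← intervalIntegral.integral_of_le hR, integral_rpow (Or.inl (by linarith)), sub_add_cancel,
    Real.zero_rpow hs.ne', sub_zero]

lemma setLIntegral_mul_rpow_le_mul_mu {f : ℝ → ℝ} {c : ℝ} (hE : MeasurableSet E)
    (hE1 : E ⊆ Ici 1) (hf : ∀ y ∈ E, f y ≤ c) :
    ∫⁻ y in E, ENNReal.ofReal (f y * y ^ (n - 1)) ≤ ENNReal.ofReal c * mu n E := by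
  rw [mu_apply_of_subset hE hE1, ← lintegral_const_mul' _ _ ENNReal.ofReal_ne_top]
  refine setLIntegral_mono' hE fun y hy => ?_
  rw [← ENNReal.ofReal_mul' (Real.rpow_nonneg (zero_le_one.trans (hE1 hy)) _)]
  exact ENNReal.ofReal_le_ofReal
    (mul_le_mul_of_nonneg_right (hf y hy) (Real.rpow_nonneg (zero_le_one.trans (hE1 hy)) _))

lemma setLIntegral_rpow_neg_mul_le_mu (hβ : 0 ≤ β) (hE : MeasurableSet E) (hE1 : E ⊆ Ici 1) :
    ∫⁻ y in E, ENNReal.ofReal (y ^ (-β) * y ^ (n - 1)) ≤ mu n E := by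
  simpa using setLIntegral_mul_rpow_le_mul_mu (n := n) (c := 1) hE hE1
    fun y hy => Real.rpow_le_one_of_one_le_of_nonpos (hE1 hy) (neg_nonpos.mpr hβ)

lemma setLIntegral_inter_Iic_rpow_neg_mul_le (hβn : β < n) (hE1 : E ⊆ Ici 1) {R : ℝ}
    (hR : 0 ≤ R) :
    ∫⁻ y in E ∩ Iic R, ENNReal.ofReal (y ^ (-β) * y ^ (n - 1)) ≤
      ENNReal.ofReal (R ^ (n - β) / (n - β)) := by
  have hsub : E ∩ Iic R ⊆ Ioc 0 R := fun y hy => ⟨zero_lt_one.trans_le (hE1 hy.1), hy.2⟩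
  calc ∫⁻ y in E ∩ Iic R, ENNReal.ofReal (y ^ (-β) * y ^ (n - 1))
      ≤ ∫⁻ y in Ioc 0 R, ENNReal.ofReal (y ^ (-β) * y ^ (n - 1)) := lintegral_mono_set hsub
    _ = ∫⁻ y in Ioc 0 R, ENNReal.ofReal (y ^ (n - β - 1)) := by
      refine setLIntegral_congr_fun measurableSet_Ioc fun y hy => ?_
      rw [← Real.rpow_add hy.1]
      ring_nf
    _ = ENNReal.ofReal (R ^ (n - β) / (n - β)) :=
      lintegral_Ioc_zero_rpow_sub_one (sub_pos.mpr hβn) hR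

lemma setLIntegral_rpow_neg_mul_le_add (hβ : 0 ≤ β) (hβn : β < n) (hE : MeasurableSet E)
    (hE1 : E ⊆ Ici 1) {R : ℝ} (hR : 0 < R) :
    ∫⁻ y in E, ENNReal.ofReal (y ^ (-β) * y ^ (n - 1)) ≤
      ENNReal.ofReal (R ^ (n - β) / (n - β)) + ENNReal.ofReal (R ^ (-β)) * mu n E := by
  have hsplit : E ⊆ (E ∩ Iic R) ∪ (E ∩ Ioi R) := by
    rw [← inter_union_distrib_left, Iic_union_Ioi, inter_univ]
  have htail : ∫⁻ y in E ∩ Ioi R, ENNReal.ofReal (y ^ (-β) * y ^ (n - 1)) ≤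
      ENNReal.ofReal (R ^ (-β)) * mu n E :=
    (setLIntegral_mul_rpow_le_mul_mu (hE.inter measurableSet_Ioi) (inter_subset_left.trans hE1)
      fun y hy => Real.rpow_le_rpow_of_nonpos hR hy.2.le (neg_nonpos.mpr hβ)).trans
    (by gcongr; exact inter_subset_left)
  calc _ ≤ _ := lintegral_mono_set hsplit
    _ ≤ _ := lintegral_union_le _ _ _
    _ ≤ _ := add_le_add (setLIntegral_inter_Iic_rpow_neg_mul_le hβn hE1 hR.le) htail

lemma setLIntegral_rpow_neg_mul_le_mu_rpow (hβ : 0 ≤ β) (hβn : β < n) (hE : MeasurableSet E)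
    (hE1 : E ⊆ Ici 1) (hμ0 : mu n E ≠ 0) (hμ : mu n E ≠ ⊤) :
    ∫⁻ y in E, ENNReal.ofReal (y ^ (-β) * y ^ (n - 1)) ≤
      ENNReal.ofReal (1 / (n - β) + 1) * mu n E ^ ((n - β) / n) := by
  have hn : 0 < n := hβ.trans_lt hβn
  have hnβ : 0 < n - β := sub_pos.mpr hβn
  set t := (mu n E).toReal
  have ht : 0 < t := ENNReal.toReal_pos hμ0 hμ
  have hμt : mu n E = ENNReal.ofReal t := (ENNReal.ofReal_toReal hμ).symm
  have hR : 0 < t ^ (1 / n) := Real.rpow_pos_of_pos ht _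
  refine (setLIntegral_rpow_neg_mul_le_add hβ hβn hE hE1 hR).trans_eq ?_
  have hpow : (t ^ (1 / n)) ^ (n - β) = t ^ ((n - β) / n) := by
    rw [← Real.rpow_mul ht.le]; ring_nf
  have htail : (t ^ (1 / n)) ^ (-β) * t = t ^ ((n - β) / n) := by
    rw [← Real.rpow_mul ht.le, ← Real.rpow_add_one ht.ne']; ring_nf; field_simp
  rw [hμt, ENNReal.ofReal_rpow_of_pos ht, ← ENNReal.ofReal_mul (by positivity),
    ← ENNReal.ofReal_add (by positivity) (by positivity), ← ENNReal.ofReal_mul (by positivity),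
    hpow, htail]
  ring_nf
end

theorem integral_le_measure_rpow_general
    (n β p : ℝ) (hβ0 : 0 < β) (hβn : β < n)
    (hp1 : 1 < p) (hp2 : p ≤ n / (n - β)) :
    ∃ C > 0, ∀ E : Set ℝ, MeasurableSet E → E ⊆ Ici (1 : ℝ) → mu n E < ⊤ →
      ∫⁻ y in E, ENNReal.ofReal (y ^ (-β) * y ^ (n - 1)) ≤
        ENNReal.ofReal C * (mu n E) ^ (1 / p) := by
  have hnβ : 0 < n - β := sub_pos.mpr hβn
  have hp0 : 0 < p := zero_lt_one.trans hp1
  have hexp : (n - β) / n ≤ 1 / p := by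
    rw [div_le_div_iff₀ (hβ0.trans hβn) hp0, one_mul, mul_comm]
    exact (le_div_iff₀ hnβ).mp hp2
  have hC : 1 ≤ 1 / (n - β) + 1 := le_add_of_nonneg_left (by positivity)
  refine ⟨1 / (n - β) + 1, by positivity, fun E hE hE1 hμ => ?_⟩
  rcases le_total (mu n E) 1 with hsmall | hlarge
  · calc ∫⁻ y in E, ENNReal.ofReal (y ^ (-β) * y ^ (n - 1))
        ≤ mu n E := setLIntegral_rpow_neg_mul_le_mu hβ0.le hE hE1
      _ = mu n E ^ (1 : ℝ) := (ENNReal.rpow_one _).symm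
      _ ≤ mu n E ^ (1 / p) :=
          ENNReal.rpow_le_rpow_of_exponent_ge hsmall ((div_le_one hp0).mpr hp1.le)
      _ ≤ _ := le_mul_of_one_le_left zero_le (ENNReal.one_le_ofReal.mpr hC)
  · calc ∫⁻ y in E, ENNReal.ofReal (y ^ (-β) * y ^ (n - 1))
        ≤ ENNReal.ofReal (1 / (n - β) + 1) * mu n E ^ ((n - β) / n) :=
          setLIntegral_rpow_neg_mul_le_mu_rpow hβ0.le hβn hE hE1
            (one_pos.trans_le hlarge).ne' hμ.ne
      _ ≤ _ := by gcongr

/-- For `n > 1`, `0 < β < n` and `1 < p ≤ n/(n-β)`, there is `C > 0` such that for every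
measurable `E ⊆ [1,∞)` of finite `μ_n`-measure, `∫_E y^{-β} y^{n-1} dy ≤ C μ_n(E)^{1/p}`. -/
theorem integral_le_measure_rpow
    (n β p : ℝ) (hn : 1 < n) (hβ0 : 0 < β) (hβn : β < n)
    (hp1 : 1 < p) (hp2 : p ≤ n / (n - β)) :
    ∃ C > 0, ∀ E : Set ℝ, MeasurableSet E → E ⊆ Ici (1 : ℝ) → mu n E < ⊤ →
      ∫⁻ y in E, ENNReal.ofReal (y ^ (-β) * y ^ (n - 1)) ≤
        ENNReal.ofReal C * (mu n E) ^ (1 / p) :=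
  integral_le_measure_rpow_general n β p hβ0 hβn hp1 hp2
end

section
/- Let 1 < d₁ < 2 < d₂ and set p₀ = d₁' = d₁/(d₁−1). Consider the operator T χ_E(x) = ∫₁^∞ K(x,y) χ_E(y) y^{d₁−1} dy with kernel K(x,y) = x^{1−d₂} y^{−1} for 1 ≤ x ≤ y and K(x,y) = x^{−d₂} for x > y ≥ 1. Then there exists a constant C > 0 such that for every measurable set E ⊆ [1,∞) with μ_{d₁}(E) < ∞ and every s > 0, μ_{d₂}({x ∈ [1,∞) : Tχ_E(x) > s}) ≤ (C μ_{d₁}(E)^{1/p₀} / s)^{p₀}. (That is, T is of restricted weak type (p₀, p₀) from ([1,∞), μ_{d₁}) to ([1,∞), μ_{d₂}).) -/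
open MeasureTheory Set

open Real Filter Topology

/-!
For `x ≥ 1` the kernel satisfies `K(x,y) y^(d₁-1) ≤ x^(1-d₂) y^(d₁-2)`, so
`Tχ_E(x) ≤ x^(1-d₂) ∫_E y^(d₁-2) dy`. Splitting `E` at a height `b`, the part below `b`
contributes at most `∫_0^b y^(d₁-2) dy = b^(d₁-1)/(d₁-1)` and the part above at most
`μ_{d₁}(E)/b`; the choice `b = μ_{d₁}(E)^(1/d₁)` gives `∫_E y^(d₁-2) dy ≤ p₀ μ_{d₁}(E)^(1/p₀)`.
So `{Tχ_E > s}` is contained in `[1, R)` with `R^(d₂-1) = p₀ μ_{d₁}(E)^(1/p₀) / s`, which is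
empty unless `R > 1`, and then has `μ_{d₂}`-measure at most `R^d₂ ≤ (p₀ μ_{d₁}(E)^(1/p₀) / s)^p₀`
because `d₂/(d₂-1) ≤ d₁/(d₁-1)`.
-/

lemma integrableOn_Ioc_zero_rpow {r : ℝ} (hr : -1 < r) (b : ℝ) :
    IntegrableOn (fun y : ℝ => y ^ r) (Ioc 0 b) :=
  (intervalIntegral.intervalIntegrable_rpow' hr (a := 0) (b := b)).1

lemma setIntegral_Ioc_zero_rpow {r b : ℝ} (hr : -1 < r) (hb : 0 ≤ b) :
    ∫ y in Ioc 0 b, y ^ r = b ^ (r + 1) / (r + 1) := by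
  rw [← intervalIntegral.integral_of_le hb, integral_rpow (.inl hr),
    zero_rpow (by linarith), sub_zero]

lemma mu_apply (n : ℝ) {S : Set ℝ} (hS : MeasurableSet S) :
    mu n S = ∫⁻ x in S ∩ Ici 1, ENNReal.ofReal (x ^ (n - 1)) := by
  rw [mu, withDensity_apply _ hS, Measure.restrict_restrict hS]

lemma mu_apply_of_subset_Ici (n : ℝ) {S : Set ℝ} (hS : MeasurableSet S) (hS1 : S ⊆ Ici 1) :
    mu n S = ∫⁻ x in S, ENNReal.ofReal (x ^ (n - 1)) := by
  rw [mu_apply n hS, inter_eq_left.mpr hS1]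

lemma mu_Iio_le {n : ℝ} (hn : 0 < n) {R : ℝ} (hR : 0 ≤ R) :
    mu n (Iio R) ≤ ENNReal.ofReal (R ^ n / n) := by
  have hnn : ∀ᵐ x ∂volume.restrict (Ioc 0 R), 0 ≤ x ^ (n - 1) :=
    ae_restrict_of_forall_mem measurableSet_Ioc fun x hx => rpow_nonneg hx.1.le _
  calc mu n (Iio R) = ∫⁻ x in Iio R ∩ Ici 1, ENNReal.ofReal (x ^ (n - 1)) :=
        mu_apply n measurableSet_Iio
    _ ≤ ∫⁻ x in Ioc 0 R, ENNReal.ofReal (x ^ (n - 1)) :=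
        lintegral_mono_set fun x hx => ⟨by linarith [hx.2.out], hx.1.out.le⟩
    _ = ENNReal.ofReal (R ^ n / n) := by
        rw [← ofReal_integral_eq_lintegral_ofReal
          (integrableOn_Ioc_zero_rpow (by linarith) R) hnn,
          setIntegral_Ioc_zero_rpow (by linarith) hR, sub_add_cancel]

lemma integrableOn_rpow_of_mu_lt_top {n : ℝ} {E : Set ℝ} (hE : MeasurableSet E)
    (hE1 : E ⊆ Ici 1) (hfin : mu n E < ⊤) :
    IntegrableOn (fun y => y ^ (n - 1)) E := by
  have hnn : 0 ≤ᵐ[volume.restrict E] fun y => y ^ (n - 1) :=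
    ae_restrict_of_forall_mem hE fun y hy => rpow_nonneg (zero_le_one.trans (hE1 hy)) _
  refine ⟨(by fun_prop : Measurable fun y : ℝ => y ^ (n - 1)).aestronglyMeasurable, ?_⟩
  rwa [hasFiniteIntegral_iff_ofReal hnn, ← mu_apply_of_subset_Ici n hE hE1]

lemma ofReal_setIntegral_rpow_eq_mu {n : ℝ} {E : Set ℝ} (hE : MeasurableSet E)
    (hE1 : E ⊆ Ici 1) (hfin : mu n E < ⊤) :
    ENNReal.ofReal (∫ y in E, y ^ (n - 1)) = mu n E := by
  rw [ofReal_integral_eq_lintegral_ofReal (integrableOn_rpow_of_mu_lt_top hE hE1 hfin)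
    (ae_restrict_of_forall_mem hE fun y hy => rpow_nonneg (zero_le_one.trans (hE1 hy)) _),
    mu_apply_of_subset_Ici n hE hE1]

lemma mu_setOf_lt_mul_rpow_le {n p c s : ℝ} (hn : 1 < n) (hp : n / (n - 1) ≤ p) (hc : 0 ≤ c)
    (hs : 0 < s) :
    mu n {x | x ∈ Ici 1 ∧ s < c * x ^ (1 - n)} ≤ ENNReal.ofReal ((c / s) ^ p) := by
  have hn1 : 0 < n - 1 := by linarith
  rcases le_or_gt (c / s) 1 with hu | hu
  · suffices {x | x ∈ Ici 1 ∧ s < c * x ^ (1 - n)} = ∅ by rw [this, measure_empty]; exact zero_le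
    refine eq_empty_of_forall_notMem fun x ⟨hx, hlt⟩ => hlt.not_ge ?_
    calc c * x ^ (1 - n) ≤ c * 1 :=
          mul_le_mul_of_nonneg_left (rpow_le_one_of_one_le_of_nonpos hx (by linarith)) hc
      _ ≤ s := by rwa [mul_one, ← div_le_one hs]
  set R := (c / s) ^ (n - 1)⁻¹
  have hsub : {x | x ∈ Ici 1 ∧ s < c * x ^ (1 - n)} ⊆ Iio R := by
    rintro x ⟨hx, hlt⟩
    have hx0 : 0 < x := zero_lt_one.trans_le hx
    have hxn : x ^ (1 - n) = (x ^ (n - 1))⁻¹ := by rw [← rpow_neg hx0.le, neg_sub]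
    rw [hxn, ← div_eq_mul_inv, lt_div_iff₀ (rpow_pos_of_pos hx0 _), mul_comm,
      ← lt_div_iff₀ hs] at hlt
    exact (lt_rpow_inv_iff_of_pos hx0.le (by positivity) hn1).2 hlt
  calc mu n {x | x ∈ Ici 1 ∧ s < c * x ^ (1 - n)} ≤ mu n (Iio R) := measure_mono hsub
    _ ≤ ENNReal.ofReal (R ^ n / n) := mu_Iio_le (by linarith) (by positivity)
    _ ≤ ENNReal.ofReal ((c / s) ^ p) := by
        refine ENNReal.ofReal_le_ofReal ((div_le_self (by positivity) hn.le).trans ?_)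
        rw [← rpow_mul (by positivity), inv_mul_eq_div]
        exact rpow_le_rpow_of_exponent_le hu.le hp

lemma rpow_sub_two_le_div {d b y : ℝ} (hb : 0 < b) (hy : b ≤ y) :
    y ^ (d - 2) ≤ y ^ (d - 1) / b := by
  have hy0 : 0 < y := hb.trans_le hy
  rw [show d - 1 = d - 2 + 1 by ring, rpow_add_one hy0.ne', le_div_iff₀ hb]
  exact mul_le_mul_of_nonneg_left hy (rpow_nonneg hy0.le _)

lemma integrableOn_rpow_sub_two {d : ℝ} (hd : 1 < d) {E : Set ℝ} (hE : MeasurableSet E)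
    (hE0 : E ⊆ Ioi 0) (hint : IntegrableOn (fun y => y ^ (d - 1)) E) :
    IntegrableOn (fun y => y ^ (d - 2)) E := by
  have hlarge : IntegrableOn (fun y => y ^ (d - 2)) (E ∩ Ici 1) := by
    refine (hint.mono_set inter_subset_left).mono'
      (by fun_prop : Measurable fun y : ℝ => y ^ (d - 2)).aestronglyMeasurable
      (ae_restrict_of_forall_mem (hE.inter measurableSet_Ici) fun y hy => ?_)
    rw [norm_of_nonneg (rpow_nonneg (zero_le_one.trans hy.2) _)]
    exact rpow_le_rpow_of_exponent_le hy.2 (by linarith)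
  refine ((integrableOn_Ioc_zero_rpow (by linarith) 1).union hlarge).mono_set fun y hy => ?_
  rcases le_or_gt 1 y with h | h
  · exact .inr ⟨hy, h⟩
  · exact .inl ⟨hE0 hy, h.le⟩

lemma setIntegral_rpow_sub_two_le_add {d b : ℝ} (hd : 1 < d) (hb : 0 < b) {E : Set ℝ}
    (hE : MeasurableSet E) (hE0 : E ⊆ Ioi 0) (hint : IntegrableOn (fun y => y ^ (d - 1)) E) :
    ∫ y in E, y ^ (d - 2) ≤ b ^ (d - 1) / (d - 1) + (∫ y in E, y ^ (d - 1)) / b := by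
  have hint₂ := integrableOn_rpow_sub_two hd hE hE0 hint
  have hsplit : E = (E ∩ Iio b) ∪ (E ∩ Ici b) := by
    rw [← inter_union_distrib_left, Iio_union_Ici, inter_univ]
  have hsmall : ∫ y in E ∩ Iio b, y ^ (d - 2) ≤ b ^ (d - 1) / (d - 1) := by
    calc ∫ y in E ∩ Iio b, y ^ (d - 2) ≤ ∫ y in Ioc 0 b, y ^ (d - 2) :=
          setIntegral_mono_set (integrableOn_Ioc_zero_rpow (by linarith) b)
            (ae_restrict_of_forall_mem measurableSet_Ioc fun y hy => rpow_nonneg hy.1.le _)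
            (Eventually.of_forall fun y hy => ⟨hE0 hy.1, hy.2.out.le⟩)
      _ = b ^ (d - 1) / (d - 1) := by
          rw [setIntegral_Ioc_zero_rpow (by linarith) hb.le, sub_add]; norm_num
  have hlarge : ∫ y in E ∩ Ici b, y ^ (d - 2) ≤ (∫ y in E, y ^ (d - 1)) / b := by
    calc ∫ y in E ∩ Ici b, y ^ (d - 2) ≤ ∫ y in E ∩ Ici b, y ^ (d - 1) / b :=
          setIntegral_mono_on (hint₂.mono_set inter_subset_left)
            ((hint.mono_set inter_subset_left).div_const b) (hE.inter measurableSet_Ici)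
            fun y hy => rpow_sub_two_le_div hb hy.2
      _ ≤ (∫ y in E, y ^ (d - 1)) / b := by
          rw [integral_div]
          exact div_le_div_of_nonneg_right (setIntegral_mono_set hint
            (ae_restrict_of_forall_mem hE fun y hy => rpow_nonneg (hE0 hy).out.le _)
            (Eventually.of_forall inter_subset_left)) hb.le
  calc ∫ y in E, y ^ (d - 2)
      = (∫ y in E ∩ Iio b, y ^ (d - 2)) + ∫ y in E ∩ Ici b, y ^ (d - 2) := by
        conv_lhs => rw [hsplit]
        exact setIntegral_union (Disjoint.mono inter_subset_right inter_subset_right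
          (Iio_disjoint_Ici le_rfl)) (hE.inter measurableSet_Ici)
          (hint₂.mono_set inter_subset_left) (hint₂.mono_set inter_subset_left)
    _ ≤ _ := add_le_add hsmall hlarge

lemma setIntegral_rpow_sub_two_le {d : ℝ} (hd : 1 < d) {E : Set ℝ} (hE : MeasurableSet E)
    (hE0 : E ⊆ Ioi 0) (hint : IntegrableOn (fun y => y ^ (d - 1)) E) :
    ∫ y in E, y ^ (d - 2) ≤ d / (d - 1) * (∫ y in E, y ^ (d - 1)) ^ ((d - 1) / d) := by
  have hd1 : 0 < d - 1 := by linarith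
  set m := ∫ y in E, y ^ (d - 1)
  have hsplit : ∀ b > 0, ∫ y in E, y ^ (d - 2) ≤ b ^ (d - 1) / (d - 1) + m / b :=
    fun b hb => setIntegral_rpow_sub_two_le_add hd hb hE hE0 hint
  have hm0 : 0 ≤ m := setIntegral_nonneg hE fun y hy => rpow_nonneg (hE0 hy).out.le _
  rcases hm0.eq_or_lt' with hm | hm
  · -- letting the splitting point `b` tend to `0`
    have hlim : Tendsto (fun b : ℝ => b ^ (d - 1) / (d - 1) + m / b) (𝓝[>] 0) (𝓝 0) := by
      simp only [hm, zero_div, add_zero]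
      simpa [zero_rpow hd1.ne'] using
        (((continuous_rpow_const hd1.le).tendsto 0).mono_left nhdsWithin_le_nhds).div_const (d - 1)
    rw [hm, zero_rpow (by positivity), mul_zero]
    exact ge_of_tendsto hlim (eventually_nhdsWithin_of_forall hsplit)
  · have hb : (m ^ (1 / d)) ^ (d - 1) = m ^ ((d - 1) / d) := by
      rw [← rpow_mul hm.le]; ring_nf
    have hmb : m / m ^ (1 / d) = m ^ ((d - 1) / d) := by
      rw [← rpow_one_sub' hm.le (sub_pos.2 ((div_lt_one (by linarith)).2 hd)).ne']
      congr 1; field_simp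
    calc ∫ y in E, y ^ (d - 2) ≤ (m ^ (1 / d)) ^ (d - 1) / (d - 1) + m / m ^ (1 / d) :=
          hsplit _ (by positivity)
      _ = d / (d - 1) * m ^ ((d - 1) / d) := by
          rw [hb, hmb]; field_simp; ring

noncomputable def powerKernel (d₂ x y : ℝ) : ℝ :=
  if x ≤ y then x ^ (1 - d₂) * y ^ (-1 : ℝ) else x ^ (-d₂)

lemma powerKernel_nonneg {d₂ x y : ℝ} (hx : 0 ≤ x) (hy : 0 ≤ y) : 0 ≤ powerKernel d₂ x y := by
  unfold powerKernel
  split_ifs <;> positivity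

lemma powerKernel_mul_rpow_le {d₁ d₂ x y : ℝ} (hx : 0 < x) (hy : 0 < y) :
    powerKernel d₂ x y * y ^ (d₁ - 1) ≤ x ^ (1 - d₂) * y ^ (d₁ - 2) := by
  unfold powerKernel
  split_ifs with hxy
  · rw [mul_assoc, ← rpow_add hy, show -1 + (d₁ - 1) = d₁ - 2 by ring]
  · rw [show 1 - d₂ = -d₂ + 1 by ring, rpow_add_one hx.ne', show d₁ - 1 = d₁ - 2 + 1 by ring,
      rpow_add_one hy.ne', mul_assoc, mul_comm x]
    gcongr
    exact (not_le.1 hxy).le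

lemma setIntegral_powerKernel_le {d₁ d₂ x : ℝ} (hx : 0 < x) {E : Set ℝ} (hE : MeasurableSet E)
    (hE0 : E ⊆ Ioi 0) (hint : IntegrableOn (fun y => y ^ (d₁ - 2)) E) :
    ∫ y in E, powerKernel d₂ x y * y ^ (d₁ - 1) ≤ x ^ (1 - d₂) * ∫ y in E, y ^ (d₁ - 2) := by
  rw [← integral_const_mul]
  exact integral_mono_of_nonneg
    (ae_restrict_of_forall_mem hE fun y hy =>
      mul_nonneg (powerKernel_nonneg hx.le (hE0 hy).out.le) (rpow_nonneg (hE0 hy).out.le _))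
    (hint.const_mul _)
    (ae_restrict_of_forall_mem hE fun y hy => powerKernel_mul_rpow_le hx (hE0 hy))

lemma setIntegral_powerKernel_le_mul_rpow {d₁ d₂ x : ℝ} (hd₁ : 1 < d₁) (hx : 0 < x) {E : Set ℝ}
    (hE : MeasurableSet E) (hE0 : E ⊆ Ioi 0) (hint : IntegrableOn (fun y => y ^ (d₁ - 1)) E) :
    ∫ y in E, powerKernel d₂ x y * y ^ (d₁ - 1) ≤
      d₁ / (d₁ - 1) * (∫ y in E, y ^ (d₁ - 1)) ^ ((d₁ - 1) / d₁) * x ^ (1 - d₂) := by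
  calc ∫ y in E, powerKernel d₂ x y * y ^ (d₁ - 1)
      ≤ x ^ (1 - d₂) * ∫ y in E, y ^ (d₁ - 2) :=
        setIntegral_powerKernel_le hx hE hE0 (integrableOn_rpow_sub_two hd₁ hE hE0 hint)
    _ ≤ x ^ (1 - d₂) * (d₁ / (d₁ - 1) * (∫ y in E, y ^ (d₁ - 1)) ^ ((d₁ - 1) / d₁)) :=
        mul_le_mul_of_nonneg_left (setIntegral_rpow_sub_two_le hd₁ hE hE0 hint)
          (rpow_nonneg hx.le _)
    _ = _ := mul_comm _ _

lemma ENNReal.ofReal_mul_rpow_div_rpow {a m s q p : ℝ} (ha : 0 ≤ a) (hm : 0 ≤ m) (hq : 0 ≤ q)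
    (hs : 0 < s) (hp : 0 ≤ p) :
    (ENNReal.ofReal a * ENNReal.ofReal m ^ q / ENNReal.ofReal s) ^ p =
      ENNReal.ofReal ((a * m ^ q / s) ^ p) := by
  rw [ENNReal.ofReal_rpow_of_nonneg hm hq, ← ENNReal.ofReal_mul ha,
    ← ENNReal.ofReal_div_of_pos hs, ENNReal.ofReal_rpow_of_nonneg (by positivity) hp]

/-- For `1 < d₁ < 2 < d₂` and `p₀ = d₁' = d₁/(d₁-1)`, the integral operator with kernel
`K(x,y) = x^{1-d₂} y^{-1}` for `x ≤ y` and `x^{-d₂}` for `x > y` is of restricted weak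
type `(p₀,p₀)` from `([1,∞), μ_{d₁})` to `([1,∞), μ_{d₂})`. -/
theorem IV1_restricted_weak_type
    (d₁ d₂ p₀ : ℝ) (hd₁ : 1 < d₁) (hd₁2 : d₁ < 2) (hd₂ : 2 < d₂)
    (hp₀ : p₀ = d₁ / (d₁ - 1)) :
    ∃ C > 0, ∀ E : Set ℝ, MeasurableSet E → E ⊆ Ici (1 : ℝ) → mu d₁ E < ⊤ →
      ∀ s > 0,
        mu d₂ {x | x ∈ Ici (1 : ℝ) ∧
            s < ∫ y in E, (if x ≤ y then x ^ (1 - d₂) * y ^ (-1 : ℝ) else x ^ (-d₂))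
              * y ^ (d₁ - 1)} ≤
          (ENNReal.ofReal C * (mu d₁ E) ^ (1 / p₀) / ENNReal.ofReal s) ^ p₀ := by
  subst hp₀
  have hd₁1 : 0 < d₁ - 1 := by linarith
  have hexp : d₂ / (d₂ - 1) ≤ d₁ / (d₁ - 1) := by
    rw [div_le_div_iff₀ (by linarith) hd₁1]; linarith
  refine ⟨d₁ / (d₁ - 1), by positivity, fun E hE hE1 hEfin s hs => ?_⟩
  have hE0 : E ⊆ Ioi 0 := hE1.trans (Ici_subset_Ioi.2 one_pos)
  have hint := integrableOn_rpow_of_mu_lt_top hE hE1 hEfin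
  have hm0 : 0 ≤ ∫ y in E, y ^ (d₁ - 1) :=
    setIntegral_nonneg hE fun y hy => rpow_nonneg (hE0 hy).out.le _
  rw [← ofReal_setIntegral_rpow_eq_mu hE hE1 hEfin, one_div_div,
    ENNReal.ofReal_mul_rpow_div_rpow (by positivity) hm0 (by positivity) hs (by positivity)]
  calc _ ≤ mu d₂ {x | x ∈ Ici 1 ∧
        s < d₁ / (d₁ - 1) * (∫ y in E, y ^ (d₁ - 1)) ^ ((d₁ - 1) / d₁) * x ^ (1 - d₂)} :=
        measure_mono fun x (hx : _ ∧ _) => ⟨hx.1, hx.2.trans_le <|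
          setIntegral_powerKernel_le_mul_rpow hd₁ (zero_lt_one.trans_le hx.1) hE hE0 hint⟩
    _ ≤ _ := mu_setOf_lt_mul_rpow_le (by linarith) hexp (by positivity) hs
end
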